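/- Let c > 0 and let x be the search point associated with a vertex of the random forest F' at depth at most d in its tree, and let y be the search point of the root of that tree. Then for all k ≥ 2edc, Pr[x and y differ in more than k bits] ≤ 2^{-k}. -/

import Mathlib

open MeasureTheory
open scoped ENNReal NNReal

namespace EA

attribute [local instance] Classical.propDecidable

/-- A search point: a bit string of length `n`. -/
abbrev Pt (n : ℕ) := Fin n → Bool

/-- Number of one-bits of `x` inside the index set `A`. -/
def onesIn {n : ℕ} (A : Finset (Fin n)) (x : Pt n) : ℕ :=
  (A.filter fun i => x i = true).card

/-- Number of zero-bits of `x` inside the index set `A`. -/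
def zerosIn {n : ℕ} (A : Finset (Fin n)) (x : Pt n) : ℕ :=
  (A.filter fun i => x i = false).card

/-- The OneMax value: the number of one-bits. -/
def OM {n : ℕ} (x : Pt n) : ℕ := onesIn Finset.univ x

/-- Density `d(A, x)` of zero-bits of `x` in `A`. -/
noncomputable def dens {n : ℕ} (A : Finset (Fin n)) (x : Pt n) : ℝ :=
  (zerosIn A x : ℝ) / (A.card : ℝ)

/-- Hamming distance: the number of bits in which `x` and `y` differ. -/
def hamming {n : ℕ} (x y : Pt n) : ℕ :=
  (Finset.univ.filter fun i : Fin n => x i ≠ y i).card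

/-! ### Mutation as a probability mass function -/

/-- Bernoulli distribution with parameter `min p 1`. -/
noncomputable def bern (p : ℝ≥0∞) : PMF Bool := PMF.bernoulli (min p 1).toNNReal
  (by rw [← ENNReal.toNNReal_one]; exact ENNReal.toNNReal_mono ENNReal.one_ne_top (min_le_right _ _))

/-- Product of `k` independent Bernoulli random bits. -/
noncomputable def piBern : (k : ℕ) → ℝ≥0∞ → PMF (Fin k → Bool)
  | 0, _ => PMF.pure fun i => i.elim0
  | k + 1, p => (bern p).bind fun b => (piBern k p).map (Fin.cons b)

/-- Standard bit mutation with rate `c/n`: each bit of `x` is flipped independently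
with probability `c/n`. -/
noncomputable def mutPMF (n : ℕ) (c : ℝ) (x : Pt n) : PMF (Pt n) :=
  (piBern n (ENNReal.ofReal (c / n))).map fun b i => xor (x i) (b i)

/-- The result of `d` consecutive independent standard bit mutations started at `x`. -/
noncomputable def mutChain (n : ℕ) (c : ℝ) : ℕ → Pt n → PMF (Pt n)
  | 0, x => PMF.pure x
  | d + 1, x => (mutPMF n c x).bind (mutChain n c d)

/-! ### The random forest `F'` (and a single tree of it), as a Markov chain of PMFs.

A forest state is a list of vertices in order of creation; entry `some j` means the vertex
is a child of vertex `j`, and `none` means the vertex is a root. -/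

/-- One round of the forest process: each existing vertex independently spawns a child with
probability `1/μ`, and one new root is added. -/
noncomputable def forestStep (μ : ℕ) (s : List (Option ℕ)) : PMF (List (Option ℕ)) :=
  (piBern s.length ((μ : ℝ≥0∞))⁻¹).map fun b =>
    s ++ (((List.finRange s.length).filter fun i => b i).map fun i => some i.1) ++ [none]

/-- The random forest `F'`: in round `0` a single root; in each subsequent round each vertex
spawns a child with probability `1/μ` and a new root is added. -/
noncomputable def forestPMF (μ : ℕ) : ℕ → PMF (List (Option ℕ))
  | 0 => PMF.pure [none]
  | t + 1 => (forestPMF μ t).bind (forestStep μ)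

/-- One round of the single-tree process: each existing vertex independently spawns a child
with probability `1/μ` (no new roots). -/
noncomputable def treeStep (μ : ℕ) (s : List (Option ℕ)) : PMF (List (Option ℕ)) :=
  (piBern s.length ((μ : ℝ≥0∞))⁻¹).map fun b =>
    s ++ (((List.finRange s.length).filter fun i => b i).map fun i => some i.1)

/-- A single tree of the random forest `F'`. -/
noncomputable def treePMF (μ : ℕ) : ℕ → PMF (List (Option ℕ))
  | 0 => PMF.pure [none]
  | t + 1 => (treePMF μ t).bind (treeStep μ)

/-- Depth of vertex `i` in a forest state (with fuel). -/
def depthL (s : List (Option ℕ)) : ℕ → ℕ → ℕ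
  | 0, _ => 0
  | fuel + 1, i =>
    match s.getD i none with
    | none => 0
    | some j => depthL s fuel j + 1

/-- Depth of vertex `i` in a forest state. -/
def depthOf (s : List (Option ℕ)) (i : ℕ) : ℕ := depthL s (i + 1) i

/-- The number of vertices of depth `d` in a forest state. -/
def countDepth (s : List (Option ℕ)) (d : ℕ) : ℕ :=
  ((List.range s.length).filter fun i => depthOf s i == d).length

/-! ### The source of randomness.

The sample space is the interval `[0,1)` with Lebesgue measure; all the randomness used by the
algorithm is extracted from the binary digits of the sample `u ∈ [0,1)`, re-packaged into a
countable family of independent uniform random variables `unif u m ∈ [0,1)`. -/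

/-- The `k`-th binary digit of `u ∈ [0,1)`. -/
noncomputable def bit (u : ℝ) (k : ℕ) : Bool := decide (⌊u * 2 ^ (k + 1)⌋₊ % 2 = 1)

/-- A countable family of independent uniform-`[0,1)` random variables extracted from the
binary digits of `u`. -/
noncomputable def unif (u : ℝ) (m : ℕ) : ℝ :=
  ∑' k : ℕ, if bit u (Nat.pair m k) then ((1 : ℝ) / 2 ^ (k + 1)) else 0

/-- Independent uniforms, triple-indexed. -/
noncomputable def unifAt (u : ℝ) (a b c : ℕ) : ℝ := unif u (Nat.pair a (Nat.pair b c))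

/-- The underlying probability measure: Lebesgue measure on `[0,1)`. -/
noncomputable def P : Measure ℝ := volume.restrict (Set.Ico (0 : ℝ) 1)

/-- A uniformly random element of `{0, ..., m-1}` obtained from a uniform `r ∈ [0,1)`. -/
noncomputable def pickN (r : ℝ) (m : ℕ) : ℕ := min ⌊r * m⌋₊ (m - 1)

/-! ### The (μ+1)-EA -/

/-- A vertex (individual) identifier: `Sum.inl j` is the initial individual in slot `j`,
`Sum.inr t` is the offspring created in round `t`. -/
abbrev V := ℕ ⊕ ℕ

/-- Creation time of a vertex (used as recursion fuel). -/
def vtime : V → ℕ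
  | Sum.inl _ => 0
  | Sum.inr t => t + 1

/-- Configuration of a run of the `(μ+1)`-EA on bit strings of length `n`: population size `μ`,
mutation parameter `c` (mutation rate `c/n`), fitness function `f`, initial population `pop₀`
(only slots `< μ` are relevant), and the distinguished set `A` (the current "hot topic")
defining the rank `rk x = onesIn A x`. -/
structure Cfg (n : ℕ) where
  μ : ℕ
  c : ℝ
  f : Pt n → ℝ
  pop₀ : ℕ → Pt n
  A : Finset (Fin n)

namespace Cfg

variable {n : ℕ} (C : Cfg n)

/-- Rank of a search point: number of one-bits in `A`. -/
def rk (x : Pt n) : ℕ := onesIn C.A x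

/-- Index of the parent selected (uniformly at random) in round `t`. -/
noncomputable def parentIdx (u : ℝ) (t : ℕ) : ℕ := pickN (unifAt u 0 t 0) C.μ

/-- Standard bit mutation performed in round `t`: each bit flips independently with
probability `c/n`. -/
noncomputable def mutate (u : ℝ) (t : ℕ) (x : Pt n) : Pt n :=
  fun i => xor (x i) (decide (unifAt u 1 t i.1 < C.c / n))

/-- The `μ+1` candidates in round `t` (index `μ` is the new offspring), given state `s`. -/
noncomputable def cands (u : ℝ) (t : ℕ) (s : ℕ → Pt n × V) : ℕ → Pt n × V :=
  fun j => if j < C.μ then s j else (C.mutate u t (s (C.parentIdx u t)).1, Sum.inr t)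

/-- The index (among the `μ+1` candidates) of the removed individual in round `t`:
an individual of minimal fitness, ties broken uniformly at random. -/
noncomputable def removedIdx (u : ℝ) (t : ℕ) (s : ℕ → Pt n × V) : ℕ :=
  let g := C.cands u t s
  let M := (Finset.range (C.μ + 1)).filter fun j =>
    ∀ j' ∈ Finset.range (C.μ + 1), C.f (g j).1 ≤ C.f (g j').1
  (M.sort (· ≤ ·)).getD (pickN (unifAt u 2 t 0) M.card) 0

/-- One round of the `(μ+1)`-EA. -/
noncomputable def stepRun (u : ℝ) (t : ℕ) (s : ℕ → Pt n × V) : ℕ → Pt n × V :=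
  fun j => if j = C.removedIdx u t s then C.cands u t s C.μ else s j

/-- The population (with origins of the individuals) after `t` rounds. -/
noncomputable def run (u : ℝ) : ℕ → ℕ → Pt n × V
  | 0 => fun j => (C.pop₀ j, Sum.inl j)
  | t + 1 => C.stepRun u t (run u t)

/-- The parent (search point together with its origin vertex) selected in round `t`. -/
noncomputable def parentAt (u : ℝ) (t : ℕ) : Pt n × V := C.run u t (C.parentIdx u t)

/-- The offspring created in round `t`. -/
noncomputable def offspringAt (u : ℝ) (t : ℕ) : Pt n := C.mutate u t (C.parentAt u t).1

/-- The search point removed from the population in round `t`. -/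
noncomputable def removedAt (u : ℝ) (t : ℕ) : Pt n :=
  (C.cands u t (C.run u t) (C.removedIdx u t (C.run u t))).1

/-- The search point associated with a vertex. -/
noncomputable def vpt (u : ℝ) : V → Pt n
  | Sum.inl j => C.pop₀ j
  | Sum.inr t => C.offspringAt u t

/-- The parent vertex of a vertex (`none` for initial individuals). -/
noncomputable def vparent (u : ℝ) : V → Option V
  | Sum.inl _ => none
  | Sum.inr t => some (C.parentAt u t).2

/-- Whether a vertex identifier denotes an actual individual of the run. -/
def validV : V → Prop
  | Sum.inl j => j < C.μ
  | Sum.inr _ => True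

/-- Auxiliary: follow parent pointers while the parent has rank at least `i`. -/
noncomputable def rootAux (u : ℝ) (i : ℕ) : ℕ → V → V
  | 0, v => v
  | fuel + 1, v =>
    match C.vparent u v with
    | none => v
    | some w => if i ≤ C.rk (C.vpt u w) then rootAux u i fuel w else v

/-- The root, in the family forest `F_i`, of the tree containing vertex `v`. -/
noncomputable def rootIn (u : ℝ) (i : ℕ) (v : V) : V := C.rootAux u i (vtime v) v

/-- Auxiliary: depth with fuel. -/
noncomputable def depthAux (u : ℝ) (i : ℕ) : ℕ → V → ℕ
  | 0, _ => 0
  | fuel + 1, v =>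
    match C.vparent u v with
    | none => 0
    | some w => if i ≤ C.rk (C.vpt u w) then depthAux u i fuel w + 1 else 0

/-- The depth of vertex `v` in the family forest `F_i` (roots have depth `0`). -/
noncomputable def depthIn (u : ℝ) (i : ℕ) (v : V) : ℕ := C.depthAux u i (vtime v) v

/-- Whether vertex `v` is a root of the family forest `F_i`: it has rank at least `i` and
either no parent or a parent of rank less than `i`. -/
def isRootIn (u : ℝ) (i : ℕ) (v : V) : Prop :=
  i ≤ C.rk (C.vpt u v) ∧ (C.vparent u v).elim True fun w => C.rk (C.vpt u w) < i

/-- The number of individuals of rank at least `i` among initial individuals and the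
offspring of the first `t` rounds (i.e. `|X_{≥ i}|` after `t` rounds). -/
noncomputable def numGe (u : ℝ) (i : ℕ) (t : ℕ) : ℕ :=
  ((Finset.range C.μ).filter fun j => i ≤ C.rk (C.pop₀ j)).card +
  ((Finset.range t).filter fun s => i ≤ C.rk (C.offspringAt u s)).card

end Cfg

/-- The first time (possibly `⊤`) at which a predicate on rounds holds. -/
noncomputable def hitTime (p : ℕ → Prop) : ℕ∞ :=
  sInf {m : ℕ∞ | ∃ t : ℕ, m = t ∧ p t}

namespace Cfg

variable {n : ℕ} (C : Cfg n)

/-- The first round at which `X_{≥i}` is nonempty. -/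
noncomputable def tFirst (u : ℝ) (i : ℕ) : ℕ∞ :=
  hitTime fun t => 1 ≤ C.numGe u i t

/-- The first round at which `|X_{≥i}|` reaches `x`. -/
noncomputable def tReach (u : ℝ) (i : ℕ) (x : ℝ) : ℕ∞ :=
  hitTime fun t => x ≤ (C.numGe u i t : ℝ)

/-- `T^κ`: the number of rounds until `|X_{≥ i}|` reaches `μ^κ` after the first point of
`X_{≥ i}` is visited. -/
noncomputable def Tkappa (u : ℝ) (i : ℕ) (κ : ℝ) : ℕ∞ :=
  C.tReach u i ((C.μ : ℝ) ^ κ) - C.tFirst u i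

/-- `t_i`: the first round at which an individual of rank at least `i` exists. -/
noncomputable def tBirth (u : ℝ) (i : ℕ) : ℕ∞ := C.tFirst u i

/-- `T_i`: the round at which the last individual of rank at most `i` is eliminated, i.e. the
first round at which the whole population has rank larger than `i`. -/
noncomputable def tDie (u : ℝ) (i : ℕ) : ℕ∞ :=
  hitTime fun t => ∀ j < C.μ, i < C.rk ((C.run u t j).1)

/-- The last round at which an individual of rank `i` is removed from the population. -/
noncomputable def lastDelTime (u : ℝ) (i : ℕ) : ℕ :=
  sSup {t : ℕ | C.rk (C.removedAt u t) = i}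

/-- `Z_i`: the OneMax value of the last search point of rank `i` that the algorithm deletes
from its population (with `Z_i := Z_{i-1}` if no such point exists). -/
noncomputable def Z (u : ℝ) : ℕ → ℕ
  | 0 =>
    if ({t : ℕ | C.rk (C.removedAt u t) = 0}).Nonempty then
      OM (C.removedAt u (C.lastDelTime u 0))
    else 0
  | i + 1 =>
    if ({t : ℕ | C.rk (C.removedAt u t) = i + 1}).Nonempty then
      OM (C.removedAt u (C.lastDelTime u (i + 1)))
    else Z u i

/-- Event `E_a`: no individual of rank at most `i-1` creates an offspring of rank at
least `i+1`. -/
def Ea (u : ℝ) (i : ℕ) : Prop :=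
  ∀ t : ℕ, C.rk (C.parentAt u t).1 < i → C.rk (C.offspringAt u t) < i + 1

/-- The number of roots of the family forest `F_i`. -/
noncomputable def rootsCount (u : ℝ) (i : ℕ) : ℕ :=
  {v : V | C.validV v ∧ C.isRootIn u i v}.ncard

/-- Event `E_b`: there are at most `ε μ log³ μ` roots in `F_i`. -/
def Eb (u : ℝ) (i : ℕ) (ε : ℝ) : Prop :=
  (C.rootsCount u i : ℝ) ≤ ε * C.μ * (Real.log C.μ) ^ 3

/-- Event `E_c`: no vertex of rank exactly `i` of depth at most `φ log μ` in `F_i` creates an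
offspring of rank larger than `i`. -/
def Ec (u : ℝ) (i : ℕ) (φ : ℝ) : Prop :=
  ∀ t : ℕ, C.rk (C.parentAt u t).1 = i →
    (C.depthIn u i (C.parentAt u t).2 : ℝ) ≤ φ * Real.log C.μ →
    C.rk (C.offspringAt u t) ≤ i

/-- Event `E_d`: every vertex of rank `i` creating an offspring of rank at least `i+1` has a
OneMax value at least `c_d log μ` below that of its root (if the root has OneMax value at least
`(1-8ε)n`), resp. OneMax value at most `(1-4ε)n` (if the root has OneMax value at most
`(1-8ε)n`); moreover the improving mutation changes at most `(c_d/2) log μ` bits. -/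
def Ed (u : ℝ) (i : ℕ) (ε c_d : ℝ) : Prop :=
  ∀ t : ℕ, C.rk (C.parentAt u t).1 = i → i + 1 ≤ C.rk (C.offspringAt u t) →
    (((1 - 8 * ε) * n ≤ (OM (C.vpt u (C.rootIn u i (C.parentAt u t).2)) : ℝ) →
        (OM ((C.parentAt u t).1) : ℝ) ≤
          (OM (C.vpt u (C.rootIn u i (C.parentAt u t).2)) : ℝ) - c_d * Real.log C.μ) ∧
      ((OM (C.vpt u (C.rootIn u i (C.parentAt u t).2)) : ℝ) ≤ (1 - 8 * ε) * n →
        (OM ((C.parentAt u t).1) : ℝ) ≤ (1 - 4 * ε) * n) ∧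
      (hamming ((C.parentAt u t).1) (C.offspringAt u t) : ℝ) ≤ c_d / 2 * Real.log C.μ)

/-- Event `E_e`: no vertex of rank `i` has a OneMax value exceeding that of its root in `F_i`
by more than `c_e log μ`. -/
def Ee (u : ℝ) (i : ℕ) (c_e : ℝ) : Prop :=
  ∀ v : V, C.validV v → C.rk (C.vpt u v) = i →
    (OM (C.vpt u v) : ℝ) ≤ (OM (C.vpt u (C.rootIn u i v)) : ℝ) + c_e * Real.log C.μ

/-- The good event `E_good(i) = E_a ∩ E_b ∩ E_c ∩ E_d ∩ E_e`. -/
def Egood (u : ℝ) (i : ℕ) (ε φ c_d c_e : ℝ) : Prop :=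
  C.Ea u i ∧ C.Eb u i ε ∧ C.Ec u i φ ∧ C.Ed u i ε c_d ∧ C.Ee u i c_e

/-- The vertices of the family forest `F_i` present after `t` rounds, in creation order. -/
noncomputable def famVerts (u : ℝ) (i : ℕ) (t : ℕ) : List V :=
  ((List.range C.μ).filter fun j => decide (i ≤ C.rk (C.pop₀ j))).map Sum.inl ++
  ((List.range t).filter fun s => decide (i ≤ C.rk (C.offspringAt u s))).map Sum.inr

/-- The family forest `F_i` after `t` rounds, as a list of parent pointers (in creation
order); `none` denotes a root. -/
noncomputable def famForest (u : ℝ) (i : ℕ) (t : ℕ) : List (Option ℕ) :=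
  (C.famVerts u i t).map fun v =>
    match v with
    | Sum.inl _ => none
    | Sum.inr s =>
      if i ≤ C.rk (C.vpt u (C.parentAt u s).2) then
        some ((C.famVerts u i t).idxOf (C.parentAt u s).2)
      else none

/-- The number of fitness function evaluations before the first evaluation of the all-ones
string (evaluations `0, ..., μ-1` are the initial population, evaluation `μ + t` is the
offspring of round `t`). -/
noncomputable def Topt (u : ℝ) : ℕ∞ :=
  hitTime fun k =>
    (k < C.μ ∧ C.pop₀ k = fun _ => true) ∨
    (C.μ ≤ k ∧ C.offspringAt u (k - C.μ) = fun _ => true)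

end Cfg

/-- The trajectory of the random forest `F'`, driven by the uniform randomness of `u`
(tag `6`): round `0` has a single root; in each round each existing vertex spawns a child
with probability `1/μ` and a new root is added. -/
noncomputable def forestTraj (μ : ℕ) (u : ℝ) : ℕ → List (Option ℕ)
  | 0 => [none]
  | t + 1 =>
    let s := forestTraj μ u t
    s ++ ((List.range s.length).filter fun k => decide (unifAt u 6 t k < 1 / (μ : ℝ))).map some
      ++ [none]

/-- `F` is contained in `G` as a subforest: there is an injection of the vertices of `F` into
those of `G` preserving the root/parent structure. -/
def IsSubforest (F G : List (Option ℕ)) : Prop :=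
  ∃ ι : ℕ → ℕ,
    (∀ v < F.length, ι v < G.length) ∧
    (∀ v < F.length, ∀ w < F.length, ι v = ι w → v = w) ∧
    (∀ v < F.length, (F.getD v none).map ι = G.getD (ι v) none)

/-- The uniformly random initial population (tag `3`). -/
noncomputable def initU (n : ℕ) (u : ℝ) : ℕ → Pt n :=
  fun j i => decide (unifAt u 3 j i.1 < (1 : ℝ) / 2)

/-- The linear auxiliary function `f_ℓ(x) = n · Σ_{j ∈ A} x_j + Σ_{j ∉ A} x_j`. -/
noncomputable def fL (n : ℕ) (A : Finset (Fin n)) : Pt n → ℝ :=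
  fun x => (n : ℝ) * (onesIn A x : ℝ) + (onesIn Aᶜ x : ℝ)

/-- The standard `(μ+1)`-EA configuration on the linear function `f_ℓ` determined by the
hot topic `A`, with uniformly random initial population. -/
noncomputable def eaL (n μ : ℕ) (c : ℝ) (A : Finset (Fin n)) (u : ℝ) : Cfg n :=
  ⟨μ, c, fL n A, initU n u, A⟩

/-- As `eaL`, but with prescribed initial population `pop₀`. -/
noncomputable def eaLFrom (n μ : ℕ) (c : ℝ) (A : Finset (Fin n)) (pop₀ : ℕ → Pt n) : Cfg n :=
  ⟨μ, c, fL n A, pop₀, A⟩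

/-! ### The HotTopic function -/

section HT

variable (n L : ℕ) (ε : ℝ) (A B : ℕ → Finset (Fin n))

/-- The level `ℓ(x) = max {ℓ' ∈ [L] : d(B_{ℓ'}, x) ≤ ε}` (and `0` if no such `ℓ'` exists). -/
noncomputable def levelHT (x : Pt n) : ℕ :=
  ((Finset.Icc 1 L).filter fun l => dens (B l) x ≤ ε).sup id

/-- Extension of the sets `A_l` by `A_{L+1} := ∅`. -/
def AextHT (l : ℕ) : Finset (Fin n) := if l ≤ L then A l else ∅

/-- The HotTopic function
`HT(x) = ℓ(x) n² + n Σ_{i ∈ A_{ℓ(x)+1}} x_i + Σ_{i ∈ R_{ℓ(x)+1}} x_i`. -/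
noncomputable def HTf (x : Pt n) : ℕ :=
  levelHT n L ε B x * n ^ 2 +
    n * onesIn (AextHT n L A (levelHT n L ε B x + 1)) x +
    onesIn (AextHT n L A (levelHT n L ε B x + 1))ᶜ x

end HT

/-- A uniformly random element of a list (given a uniform `r ∈ [0,1)`). -/
noncomputable def pickFromList {γ : Type*} [Inhabited γ] (l : List γ) (r : ℝ) : γ :=
  l.getD (pickN r l.length) default

/-- The random set `A_l`: a uniformly random subset of `[n]` of size `a` (tag `4`). -/
noncomputable def randA (n : ℕ) (a : ℕ) (u : ℝ) (l : ℕ) : Finset (Fin n) :=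
  pickFromList ((Finset.univ.powersetCard a : Finset (Finset (Fin n))).toList) (unifAt u 4 l 0)

/-- The random set `B_l`: a uniformly random subset of `A_l` of size `b` (tag `5`). -/
noncomputable def randB (n : ℕ) (b : ℕ) (u : ℝ) (Al : Finset (Fin n)) (l : ℕ) : Finset (Fin n) :=
  pickFromList ((Al.powersetCard b).toList) (unifAt u 5 l 0)

end EA


open MeasureTheory
open scoped ENNReal

/-!
After `d'` rounds of standard bit mutation, the Hamming distance to the root is at most the
total number of flipped bits, a count of `d' n` independent events of probability `c / n`.
The union bound over `(k+1)`-sets of these events gives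
`Pr[dist > k] ≤ C(d' n, k+1) (c/n)^(k+1) ≤ (d' c)^(k+1) / (k+1)! ≤ (e d c / (k+1))^(k+1)`,
which is at most `2^-(k+1)` once `k ≥ 2 e d c`. The union-bound tail is propagated through
the mutation chain by Vandermonde's identity.
-/

namespace PMF

variable {α β : Type*}

/-- The tail that the union bound over `j`-subsets gives for the number of occurrences among `m`
events of probability at most `q` each; phrased with `toOuterMeasure` so that `α` needs no
measurable structure. -/
def BinomialTailBound (μ : PMF α) (f : α → ℕ) (m : ℕ) (q : ℝ≥0∞) : Prop :=
  ∀ j, μ.toOuterMeasure {x | j ≤ f x} ≤ m.choose j * q ^ j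

theorem toOuterMeasure_apply_le_one (μ : PMF α) (s : Set α) : μ.toOuterMeasure s ≤ 1 := by
  rw [toOuterMeasure_apply]
  exact (ENNReal.tsum_le_tsum fun x => Set.indicator_le_self s μ x).trans_eq μ.tsum_coe

namespace BinomialTailBound

variable {f : α → ℕ} {m : ℕ} {q : ℝ≥0∞}

theorem pure {x : α} (hx : f x = 0) : (PMF.pure x).BinomialTailBound f 0 q := by
  intro j
  rw [toOuterMeasure_pure_apply]
  rcases j with _ | j
  · simp
  · simp [hx]

theorem map {μ : PMF β} {φ : β → α} (h : μ.BinomialTailBound (f ∘ φ) m q) :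
    (μ.map φ).BinomialTailBound f m q := by
  intro j
  rw [toOuterMeasure_map_apply]
  exact h j

theorem bind {μ : PMF α} {κ : α → PMF β} {g : α → β → ℕ} {h : β → ℕ} {m' : ℕ}
    (hμ : μ.BinomialTailBound f m q) (hκ : ∀ z, (κ z).BinomialTailBound (g z) m' q)
    (hh : ∀ z x, h x ≤ f z + g z x) : (μ.bind κ).BinomialTailBound h (m + m') q := by
  intro j
  set φ : ℕ → ℝ≥0∞ := fun a => m'.choose (j - a) * q ^ (j - a)
  -- `z` is charged to the summand `a = min (f z) j` only, i.e. `Pr[f = a] ≤ Pr[f ≥ a]`;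
  -- Vandermonde's identity then sums these bounds exactly.
  have hpoint : ∀ z, μ z * φ (f z) ≤
      ∑ a ∈ Finset.range (j + 1), φ a * {z | a ≤ f z}.indicator μ z := by
    intro z
    have hmin : φ (min (f z) j) = φ (f z) := by
      simp only [φ, show j - min (f z) j = j - f z by omega]
    refine le_trans ?_ (Finset.single_le_sum (fun a _ => zero_le)
      (Finset.mem_range_succ_iff.2 (min_le_right (f z) j)))
    rw [Set.indicator_of_mem (s := {w | min (f z) j ≤ f w}) (min_le_left (f z) j), hmin,
      mul_comm]
  calc (μ.bind κ).toOuterMeasure {x | j ≤ h x}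
      = ∑' z, μ z * (κ z).toOuterMeasure {x | j ≤ h x} := toOuterMeasure_bind_apply _ _ _
    _ ≤ ∑' z, μ z * φ (f z) := by
        refine ENNReal.tsum_le_tsum fun z => mul_le_mul_right ?_ _
        refine ((κ z).toOuterMeasure.mono fun x hx => ?_).trans (hκ z (j - f z))
        have := hh z x
        simp only [Set.mem_ofPred_eq] at hx ⊢
        omega
    _ ≤ ∑' z, ∑ a ∈ Finset.range (j + 1), φ a * {z | a ≤ f z}.indicator μ z :=
        ENNReal.tsum_le_tsum hpoint
    _ = ∑ a ∈ Finset.range (j + 1), φ a * μ.toOuterMeasure {z | a ≤ f z} := by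
        rw [Summable.tsum_finsetSum fun _ _ => ENNReal.summable]
        simp only [ENNReal.tsum_mul_left, toOuterMeasure_apply]
    _ ≤ ∑ a ∈ Finset.range (j + 1), φ a * (m.choose a * q ^ a) :=
        Finset.sum_le_sum fun a _ => mul_le_mul_right (hμ a) _
    _ = (m + m').choose j * q ^ j := by
        have hterm : ∀ a ∈ Finset.range (j + 1), φ a * (m.choose a * q ^ a) =
            ((m.choose a * m'.choose (j - a) : ℕ) : ℝ≥0∞) * q ^ j := by
          intro a ha
          rw [← pow_mul_pow_sub q (Finset.mem_range_succ_iff.1 ha)]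
          push_cast
          ring
        rw [Finset.sum_congr rfl hterm, ← Finset.sum_mul, ← Nat.cast_sum, Nat.add_choose_eq,
          Finset.Nat.sum_antidiagonal_eq_sum_range_succ_mk]

end BinomialTailBound

end PMF

namespace EA

open PMF

theorem bern_binomialTailBound (p : ℝ≥0∞) : (bern p).BinomialTailBound Bool.toNat 1 p := by
  rintro (_ | _ | j)
  · exact ((bern p).toOuterMeasure_apply_le_one _).trans (by simp)
  · have htrue : {b : Bool | 1 ≤ b.toNat} = {true} := by ext b; cases b <;> simp
    rw [htrue, toOuterMeasure_apply_singleton]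
    change ((min p 1).toNNReal : ℝ≥0∞) ≤ (Nat.choose 1 1 : ℝ≥0∞) * p ^ 1
    simp
  · simp

theorem card_filter_cons_eq_true {m : ℕ} (b : Bool) (v : Fin m → Bool) :
    (Finset.univ.filter fun i => (Fin.cons b v : Fin (m + 1) → Bool) i = true).card =
      b.toNat + (Finset.univ.filter fun i => v i = true).card := by
  rw [Finset.card_filter, Finset.card_filter, Fin.sum_univ_succ]
  cases b <;> simp

theorem piBern_binomialTailBound (m : ℕ) (p : ℝ≥0∞) :
    (piBern m p).BinomialTailBound (fun b => (Finset.univ.filter fun i => b i = true).card) m p := by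
  induction m with
  | zero => exact BinomialTailBound.pure (by simp)
  | succ m ih =>
    have key := (bern_binomialTailBound p).bind
      (κ := fun b => (piBern m p).map (Fin.cons b))
      (h := fun v => (Finset.univ.filter fun i => v i = true).card)
      -- truncated subtraction makes the additivity hypothesis hold for every `v`
      (g := fun b v => (Finset.univ.filter fun i => v i = true).card - b.toNat)
      (fun b => BinomialTailBound.map <| by
        simpa [Function.comp_def, card_filter_cons_eq_true] using ih)
      (fun _ _ => by omega)
    rwa [add_comm 1 m] at key

theorem hamming_xor_self {n : ℕ} (y : Pt n) (b : Fin n → Bool) :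
    hamming (fun i => xor (y i) (b i)) y = (Finset.univ.filter fun i => b i = true).card := by
  unfold hamming
  congr 1
  ext i
  simp only [Finset.mem_filter, Finset.mem_univ, true_and]
  generalize y i = a
  generalize b i = a'
  cases a <;> cases a' <;> simp

theorem hamming_triangle {n : ℕ} (x y z : Pt n) : hamming x z ≤ hamming x y + hamming y z := by
  unfold hamming
  refine (Finset.card_le_card fun i => ?_).trans (Finset.card_union_le _ _)
  simp only [Finset.mem_filter, Finset.mem_union, Finset.mem_univ, true_and]
  intro hxz
  by_contra! h
  exact hxz (h.1.trans h.2)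

theorem mutPMF_binomialTailBound (n : ℕ) (c : ℝ) (y : Pt n) :
    (mutPMF n c y).BinomialTailBound (hamming · y) n (ENNReal.ofReal (c / n)) :=
  BinomialTailBound.map <| by
    simpa only [Function.comp_def, hamming_xor_self] using piBern_binomialTailBound n _

theorem mutChain_binomialTailBound (n : ℕ) (c : ℝ) (d : ℕ) (y : Pt n) :
    (mutChain n c d y).BinomialTailBound (hamming · y) (d * n) (ENNReal.ofReal (c / n)) := by
  induction d generalizing y with
  | zero =>
    rw [zero_mul]
    exact BinomialTailBound.pure (by simp [hamming])
  | succ d ih =>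
    rw [add_mul, one_mul, add_comm (d * n)]
    exact (mutPMF_binomialTailBound n c y).bind (h := (hamming · y)) ih fun z x =>
      (hamming_triangle x z y).trans_eq (add_comm _ _)

end EA

open Nat in
theorem choose_mul_pow_le_pow_div_factorial (N j : ℕ) {p : ℝ} (hp : 0 ≤ p) :
    (N.choose j : ℝ) * p ^ j ≤ (N * p) ^ j / j ! := by
  rw [mul_pow, mul_div_right_comm]
  exact mul_le_mul_of_nonneg_right (Nat.choose_le_pow_div j N) (by positivity)

open Nat Real in
theorem pow_div_factorial_le_inv_two_pow {x : ℝ} (hx : 0 ≤ x) {j : ℕ}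
    (h : 2 * exp 1 * x ≤ j) : x ^ j / j ! ≤ (2 ^ j)⁻¹ := by
  rcases Nat.eq_zero_or_pos j with rfl | hj
  · simp
  have hj' : (0 : ℝ) < j := by exact_mod_cast hj
  calc x ^ j / j ! = (x / j) ^ j * ((j : ℝ) ^ j / j !) := by
        rw [div_pow]; field_simp
    _ ≤ (x / j) ^ j * exp j := by
        gcongr; exact Real.pow_div_factorial_le_exp _ hj'.le j
    _ = (exp 1 * x / j) ^ j := by
        rw [← exp_one_pow, ← mul_pow, mul_div_assoc, mul_comm]
    _ ≤ (1 / 2) ^ j := by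
        refine pow_le_pow_left₀ (by positivity) ?_ j
        rw [div_le_iff₀ hj']
        linarith
    _ = (2 ^ j)⁻¹ := by simp

theorem choose_mul_pow_le_inv_two_pow (N j : ℕ) {p : ℝ} (hp : 0 ≤ p)
    (h : 2 * Real.exp 1 * (N * p) ≤ j) : (N.choose j : ℝ) * p ^ j ≤ (2 ^ j)⁻¹ :=
  (choose_mul_pow_le_pow_div_factorial N j hp).trans
    (pow_div_factorial_le_inv_two_pow (by positivity) h)

/-- Let `c > 0` and let `x` be the search point associated with a vertex of
the random forest `F'` at depth at most `d` in its tree (i.e. obtained from the root's search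
point `y` by `d' ≤ d` consecutive standard bit mutations with rate `c/n`). Then for all
`k ≥ 2edc`, `Pr[x and y differ in more than k bits] ≤ 2^{-k}`. -/
theorem shallow_vertex_distance (c : ℝ) (hc : 0 < c) (n : ℕ) (d : ℕ) :
    ∀ d' : ℕ, d' ≤ d → ∀ y : EA.Pt n, ∀ k : ℕ, 2 * Real.exp 1 * d * c ≤ (k : ℝ) →
      (EA.mutChain n c d' y).toMeasure {x | k < EA.hamming x y} ≤
        ENNReal.ofReal ((2 : ℝ) ^ (-(k : ℝ))) := by
  intro d' hd' y k hk
  have hp : 0 ≤ c / n := by positivity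
  have hmean : ((d' * n : ℕ) : ℝ) * (c / n) ≤ d * c := by
    rcases Nat.eq_zero_or_pos n with rfl | hn
    · simpa using by positivity
    · rw [Nat.cast_mul, mul_assoc, mul_div_cancel₀ c (by positivity)]
      gcongr
  have hreal : ((d' * n).choose (k + 1) : ℝ) * (c / n) ^ (k + 1) ≤ 2 ^ (-(k : ℝ)) := by
    refine (choose_mul_pow_le_inv_two_pow _ _ hp ?_).trans ?_
    · calc 2 * Real.exp 1 * ((d' * n : ℕ) * (c / n)) ≤ 2 * Real.exp 1 * (d * c) := by gcongr
        _ ≤ (k + 1 : ℕ) := by push_cast; linarith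
    · rw [Real.rpow_neg zero_le_two, Real.rpow_natCast]
      exact inv_anti₀ (by positivity) (pow_le_pow_right₀ one_le_two k.le_succ)
  rw [PMF.toMeasure_apply_eq_toOuterMeasure]
  calc _ ≤ ((d' * n).choose (k + 1) : ℝ≥0∞) * ENNReal.ofReal (c / n) ^ (k + 1) :=
        EA.mutChain_binomialTailBound n c d' y (k + 1)
    _ = ENNReal.ofReal (((d' * n).choose (k + 1) : ℝ) * (c / n) ^ (k + 1)) := by
        rw [ENNReal.ofReal_mul (by positivity), ENNReal.ofReal_pow hp, ENNReal.ofReal_natCast]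
    _ ≤ _ := ENNReal.ofReal_le_ofReal hreal
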